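/- arXiv:2202.13298 — 7 statements merged into one kernel-verified Lean document; each statement's English description precedes it below -/
import Mathlib

section
/- Let k ≥ 1 be an integer and F ⊆ E. Assign to each safe edge the capacity k+1 and to each unsafe edge the capacity 1. Then F is feasible for (1,k)-FGC if and only if for every nonempty set S ⊊ V, the total capacity of the edges in F ∩ δ(S) is at least k+1. -/
/-!
(1,k)-FGC capacitated characterization: with capacity `k+1` on safe edges and `1` on
unsafe edges, `F` is feasible for (1,k)-FGC iff every nonempty proper cut of `(V,F)`
has total capacity at least `k+1`.
-/

/-- The set of edges of `F` having exactly one endpoint in `S`, i.e. `F ∩ δ(S)`. -/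
def cutEdges {V E : Type*} [DecidableEq V] (ends : E → V × V) (F : Finset E)
    (S : Finset V) : Finset E :=
  F.filter fun e => ¬(((ends e).1 ∈ S) ↔ ((ends e).2 ∈ S))

/-- `F` is feasible for (p,q)-FGC: after deleting any set `F'` of at most `q` unsafe
edges, the remaining subgraph is `p`-edge-connected. -/
def FGCFeasible {V E : Type*} [Fintype V] [DecidableEq V] [DecidableEq E]
    (ends : E → V × V) (safeE : Finset E) (p q : ℕ) (F : Finset E) : Prop :=
  ∀ F' : Finset E, (∀ e ∈ F', e ∉ safeE) → F'.card ≤ q →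
    ∀ S : Finset V, S.Nonempty → S ≠ Finset.univ →
      p ≤ (cutEdges ends (F \ F') S).card

theorem stmt1 {V E : Type*} [Fintype V] [DecidableEq V] [Fintype E] [DecidableEq E]
    (ends : E → V × V) (hloop : ∀ e : E, (ends e).1 ≠ (ends e).2)
    (safeE : Finset E) (k : ℕ) (hk : 1 ≤ k) (F : Finset E) :
    FGCFeasible ends safeE 1 k F ↔
      ∀ S : Finset V, S.Nonempty → S ≠ Finset.univ →
        k + 1 ≤ ∑ e ∈ cutEdges ends F S, (if e ∈ safeE then k + 1 else 1) := by
  have hsdiff : ∀ (F' : Finset E) (S : Finset V),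
      cutEdges ends (F \ F') S = cutEdges ends F S \ F' := by
    intro F' S
    ext e
    simp [cutEdges, Finset.mem_sdiff, Finset.mem_filter]
    tauto
  constructor
  · intro h S hS hS'
    by_cases hsafe : ∃ e ∈ cutEdges ends F S, e ∈ safeE
    · obtain ⟨e, he, hes⟩ := hsafe
      calc k + 1 = (if e ∈ safeE then k + 1 else 1) := by simp [hes]
        _ ≤ _ := Finset.single_le_sum (f := fun x => if x ∈ safeE then k + 1 else 1) (fun i _ => Nat.zero_le _) he
    · push_neg at hsafe
      have hcard : k + 1 ≤ (cutEdges ends F S).card := by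
        by_contra hc
        push_neg at hc
        have := h (cutEdges ends F S) hsafe (Nat.lt_succ_iff.mp hc) S hS hS'
        rw [hsdiff, Finset.sdiff_self] at this
        simp at this
      calc k + 1 ≤ (cutEdges ends F S).card := hcard
        _ = ∑ _e ∈ cutEdges ends F S, 1 := by simp
        _ ≤ _ := Finset.sum_le_sum (fun i _ => by split <;> omega)
  · intro h F' hF' hF'k S hS hS'
    rw [hsdiff]
    by_contra hc
    push_neg at hc
    interval_cases hcard : (cutEdges ends F S \ F').card
    have hsub : cutEdges ends F S ⊆ F' := by
      intro e he
      by_contra hne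
      exact Finset.card_ne_zero.mpr ⟨e, Finset.mem_sdiff.mpr ⟨he, hne⟩⟩ hcard
    have hb := h S hS hS'
    have : ∑ e ∈ cutEdges ends F S, (if e ∈ safeE then k + 1 else 1)
        = ∑ _e ∈ cutEdges ends F S, 1 := by
      refine Finset.sum_congr rfl fun e he => ?_
      simp [hF' e (hsub he)]
    rw [this] at hb
    simp only [Finset.sum_const, smul_eq_mul, mul_one] at hb
    have := Finset.card_le_card hsub
    omega
end

section
/- Let k ≥ 1, let F be a feasible solution to a (1,k)-FGC instance on G=(V,E), and let r ∈ V. Let D=(V,A) be the directed multigraph containing, for each unsafe edge e ∈ F ∩ 𝒰, one bidirected pair of arcs arising from e, and, for each safe edge e ∈ F ∩ 𝒮, k+1 bidirected pairs arising from e, where every arc arising from an edge e has cost c_e. Then D contains an r-rooted (k+1)-arborescence of cost at most (k+1)·c(F). -/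
/-- Acyclicity of the underlying undirected multigraph of an arc set. -/
def UndirAcyclic {W A : Type*} [DecidableEq W] (arcs : A → W × W) (T : Finset A) : Prop :=
  ∀ T' ⊆ T, T'.Nonempty →
    T'.card < ((T'.image fun a => (arcs a).1) ∪ (T'.image fun a => (arcs a).2)).card

/-- `T` is an `r`-rooted arborescence. -/
def IsArborescence {W A : Type*} [DecidableEq W] (arcs : A → W × W) (r : W)
    (T : Finset A) : Prop :=
  UndirAcyclic arcs T ∧
    ∀ v : W, Relation.ReflTransGen (fun x y => ∃ a ∈ T, arcs a = (x, y)) r v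

/-- `T` is an `r`-rooted `k`-arborescence: a union of `k` arc-disjoint `r`-rooted
arborescences. -/
def IsKArborescence {W A : Type*} [DecidableEq W] [DecidableEq A] (arcs : A → W × W)
    (r : W) (k : ℕ) (T : Finset A) : Prop :=
  ∃ P : Fin k → Finset A,
    (∀ i, IsArborescence arcs r (P i)) ∧
    (∀ i j, i ≠ j → Disjoint (P i) (P j)) ∧
    Finset.univ.biUnion P = T

/-- The arc `(e, i, b)` arising from edge `e`: `b` chooses the orientation. -/
def arcEnds {V E : Type*} (ends : E → V × V) (k : ℕ) (a : E × Fin (k + 1) × Bool) :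
    V × V :=
  if a.2.2 then ends a.1 else ((ends a.1).2, (ends a.1).1)

/-!
Every `r`-cut of `D` is left by at least `k + 1` arcs: if a safe edge of `F` crosses the cut,
its `k + 1` copies do; otherwise all crossing edges are unsafe, and fewer than `k + 1` of them
could be deleted to disconnect `F`. Edmonds' theorem then yields `k + 1` arc-disjoint
`r`-arborescences. Each of them is acyclic, so it uses at most one arc per edge of `F` and costs
at most `c(F)`.

Edmonds' theorem is proved following Lovász: grow one arborescence, with vertex set `U`, arc by
arc while every `r`-cut of the unused arcs keeps at least `k - 1` leaving arcs. An arc may be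
added unless it leaves a tight set (one with fewer than `k` leaving arcs). By submodularity of
the out-degree, tight sets are closed under union; so if `T` is a largest tight set with
`U ∪ T ≠ V`, any of the at least `k` arcs leaving `U ∪ T` that does not leave `T` can be
added.
-/

open Finset

section Arborescences

variable {W A : Type*} [DecidableEq W] (arcs : A → W × W) (r : W)

def outArcs (B : Finset A) (S : Finset W) : Finset A :=
  B.filter fun a => (arcs a).1 ∈ S ∧ (arcs a).2 ∉ S

lemma card_outArcs_union_add_card_outArcs_inter_le [DecidableEq A] (B : Finset A)
    (S T : Finset W) :
    #(outArcs arcs B (S ∪ T)) + #(outArcs arcs B (S ∩ T)) ≤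
      #(outArcs arcs B S) + #(outArcs arcs B T) := by
  rw [← card_union_add_card_inter, ← card_union_add_card_inter (outArcs arcs B S)]
  exact add_le_add
    (card_le_card fun a => by simp only [outArcs, mem_union, mem_inter, mem_filter]; tauto)
    (card_le_card fun a => by simp only [outArcs, mem_union, mem_inter, mem_filter]; tauto)

lemma outArcs_subset_outArcs_sdiff [DecidableEq A] (B : Finset A) {F : Finset A}
    {S : Finset W} (hF : ∀ a ∈ F, (arcs a).2 ∈ S) :
    outArcs arcs B S ⊆ outArcs arcs (B \ F) S := by
  intro a ha
  simp only [outArcs, mem_filter, mem_sdiff] at ha ⊢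
  exact ⟨⟨ha.1, fun haF => ha.2.2 (hF a haF)⟩, ha.2⟩

def reachedVertices (F : Finset A) : Finset W :=
  insert r (F.image fun a => (arcs a).2)

structure IsPartialArborescence (F : Finset A) : Prop where
  injOn_head : Set.InjOn (fun a => (arcs a).2) F
  head_ne_root : ∀ a ∈ F, (arcs a).2 ≠ r
  reach_tail : ∀ a ∈ F,
    Relation.ReflTransGen (fun x y => ∃ b ∈ F, arcs b = (x, y)) r (arcs a).1

variable {arcs r}

lemma IsPartialArborescence.reach {F : Finset A} (hF : IsPartialArborescence arcs r F)
    {v : W} (hv : v ∈ reachedVertices arcs r F) :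
    Relation.ReflTransGen (fun x y => ∃ b ∈ F, arcs b = (x, y)) r v := by
  obtain rfl | ⟨a, ha, rfl⟩ := by simpa [reachedVertices] using hv
  · exact .refl
  · exact (hF.reach_tail a ha).tail ⟨a, ha, rfl⟩

lemma reachedVertices_insert [DecidableEq A] (F : Finset A) (a : A) :
    reachedVertices arcs r (insert a F) = insert (arcs a).2 (reachedVertices arcs r F) := by
  simp only [reachedVertices, image_insert, Finset.insert_comm]

lemma IsPartialArborescence.extend [DecidableEq A] {F : Finset A}
    (hF : IsPartialArborescence arcs r F) {a : A}
    (htail : (arcs a).1 ∈ reachedVertices arcs r F)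
    (hhead : (arcs a).2 ∉ reachedVertices arcs r F) :
    IsPartialArborescence arcs r (insert a F) := by
  have hF_heads : ∀ b ∈ F, (arcs b).2 ≠ (arcs a).2 := fun b hb h =>
    hhead (mem_insert_of_mem (mem_image.mpr ⟨b, hb, h⟩))
  have hmono : ∀ x y : W,
      (∃ b ∈ F, arcs b = (x, y)) → ∃ b ∈ insert a F, arcs b = (x, y) :=
    fun x y ⟨b, hb, h⟩ => ⟨b, mem_insert_of_mem hb, h⟩
  refine ⟨?_, ?_, ?_⟩
  · rw [coe_insert, Set.injOn_insert (fun h => hhead (mem_insert_of_mem (mem_image.mpr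
      ⟨a, h, rfl⟩)))]
    exact ⟨hF.injOn_head, fun ⟨b, hb, h⟩ => hF_heads b hb h⟩
  · rw [forall_mem_insert]
    exact ⟨fun h => hhead (h ▸ mem_insert_self _ _), hF.head_ne_root⟩
  · rw [forall_mem_insert]
    exact ⟨.mono hmono _ _ (hF.reach htail), fun b hb => .mono hmono _ _ (hF.reach_tail b hb)⟩

/-- Walking back from a root-reachable vertex of `T ⊆ F` along the unique arcs entering it, one
reaches a vertex of `T` that is no head of `T`; hence `T` has fewer arcs than vertices. -/
lemma IsPartialArborescence.undirAcyclic {F : Finset A}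
    (hF : IsPartialArborescence arcs r F) : UndirAcyclic arcs F := by
  intro T hTF ⟨a₀, ha₀⟩
  set heads := T.image fun a => (arcs a).2
  set verts := (T.image fun a => (arcs a).1) ∪ heads
  have key : ∀ v, Relation.ReflTransGen (fun x y => ∃ b ∈ F, arcs b = (x, y)) r v →
      v ∈ verts → ∃ w ∈ verts, w ∉ heads := by
    intro v hv
    induction hv with
    | refl =>
      refine fun hr => ⟨r, hr, fun h => ?_⟩
      obtain ⟨a, ha, har⟩ := mem_image.mp h
      exact hF.head_ne_root a (hTF ha) har
    | @tail u v _ hstep ih =>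
      intro hv
      by_cases hvh : v ∈ heads
      · obtain ⟨c, hcT, hcv⟩ := mem_image.mp hvh
        obtain ⟨b, hbF, hb⟩ := hstep
        have hbc : b = c := hF.injOn_head hbF (hTF hcT) (by simp [hb, hcv])
        subst hbc
        exact ih (mem_union_left _ (mem_image.mpr ⟨b, hcT, by simp [hb]⟩))
      · exact ⟨v, hv, hvh⟩
  obtain ⟨w, hw, hwh⟩ :=
    key _ (hF.reach_tail a₀ (hTF ha₀)) (mem_union_left _ (mem_image_of_mem _ ha₀))
  calc #T = #heads := (card_image_of_injOn (hF.injOn_head.mono hTF)).symm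
    _ < #verts := card_lt_card ⟨subset_union_right, fun h => hwh (h hw)⟩

lemma IsKArborescence.union_of_isArborescence [DecidableEq A] {k : ℕ} {F T : Finset A}
    (hT : IsKArborescence arcs r k T) (hF : IsArborescence arcs r F) (hFT : Disjoint F T) :
    IsKArborescence arcs r (k + 1) (F ∪ T) := by
  obtain ⟨P, hP, hdisj, rfl⟩ := hT
  have hFP : ∀ j, Disjoint F (P j) := fun j =>
    hFT.mono_right (subset_biUnion_of_mem P (mem_univ j))
  refine ⟨Fin.cons F P, Fin.cases hF hP, ?_, ?_⟩
  · intro i j hij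
    cases i using Fin.cases <;> cases j using Fin.cases
    · exact absurd rfl hij
    · exact hFP _
    · exact (hFP _).symm
    · exact hdisj _ _ fun h => hij (congrArg Fin.succ h)
  · ext a
    simp [Fin.exists_fin_succ]

variable [Fintype W]

lemma IsPartialArborescence.isArborescence {F : Finset A}
    (hF : IsPartialArborescence arcs r F) (hspan : reachedVertices arcs r F = univ) :
    IsArborescence arcs r F :=
  ⟨hF.undirAcyclic, fun v => hF.reach (hspan ▸ mem_univ v)⟩

variable (arcs r)

def IsRootedArcConnected (k : ℕ) (B : Finset A) : Prop :=
  ∀ S : Finset W, r ∈ S → S ≠ univ → k ≤ #(outArcs arcs B S)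

def IsTight (B : Finset A) (k : ℕ) (S : Finset W) : Prop :=
  r ∈ S ∧ S ≠ univ ∧ #(outArcs arcs B S) < k

variable {arcs r} [DecidableEq A]

lemma IsTight.union {B : Finset A} {k : ℕ} {S T : Finset W}
    (hB : IsRootedArcConnected arcs r (k - 1) B) (hS : IsTight arcs r B k S)
    (hT : IsTight arcs r B k T) (hST : S ∪ T ≠ univ) : IsTight arcs r B k (S ∪ T) := by
  obtain ⟨hrS, hSne, hS⟩ := hS
  obtain ⟨hrT, -, hT⟩ := hT
  have hinter := hB (S ∩ T) (mem_inter_of_mem hrS hrT)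
    fun h => hSne (univ_subset_iff.mp (h ▸ inter_subset_left))
  have := card_outArcs_union_add_card_outArcs_inter_le arcs B S T
  exact ⟨mem_union_left _ hrS, hST, by omega⟩

lemma exists_mem_outArcs_forall_isTight_notMem {B : Finset A} {k : ℕ} (hk : 1 ≤ k)
    (hB : IsRootedArcConnected arcs r (k - 1) B) {U : Finset W} (hU : U ≠ univ)
    (hUcut : ∀ S, U ⊆ S → S ≠ univ → k ≤ #(outArcs arcs B S)) :
    ∃ a ∈ outArcs arcs B U, ∀ S, IsTight arcs r B k S → a ∉ outArcs arcs B S := by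
  classical
  let P : Finset W → Prop := fun T => U ∪ T ≠ univ ∧ (T = ∅ ∨ IsTight arcs r B k T)
  obtain ⟨T, hT, hTmax⟩ :=
    exists_max_image (univ.filter P) card
      ⟨∅, mem_filter.mpr ⟨mem_univ _, by simpa, .inl rfl⟩⟩
  obtain ⟨hUT, hTt⟩ := (mem_filter.mp hT).2
  have hTk : #(outArcs arcs B T) < k := by
    rcases hTt with rfl | hTt
    · simp only [outArcs, notMem_empty, false_and, filter_false, card_empty]
      omega
    · exact hTt.2.2
  -- at least `k` arcs leave `U ∪ T`, fewer than `k` of them leave `T`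
  obtain ⟨a, haB, htailU, htailT, hheadU, hheadT⟩ :
      ∃ a ∈ B, (arcs a).1 ∈ U ∧ (arcs a).1 ∉ T ∧
        (arcs a).2 ∉ U ∧ (arcs a).2 ∉ T := by
    by_contra! h
    have hsub : outArcs arcs B (U ∪ T) ⊆ outArcs arcs B T := by
      intro a ha
      simp only [outArcs, mem_filter, mem_union, not_or] at ha ⊢
      by_cases htail : (arcs a).1 ∈ T
      · exact ⟨ha.1, htail, ha.2.2.2⟩
      · exact absurd (h a ha.1 (ha.2.1.resolve_right htail) htail ha.2.2.1) ha.2.2.2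
    have := card_le_card hsub
    have := hUcut _ subset_union_left hUT
    omega
  refine ⟨a, mem_filter.mpr ⟨haB, htailU, hheadU⟩, fun S hS haS => ?_⟩
  obtain ⟨-, htailS, hheadS⟩ := mem_filter.mp haS
  have hne : U ∪ (S ∪ T) ≠ univ := fun h => by
    simpa [hheadU, hheadS, hheadT] using eq_univ_iff_forall.mp h (arcs a).2
  have hST : IsTight arcs r B k (S ∪ T) := by
    rcases hTt with rfl | hTt
    · simpa using hS
    · exact hS.union hB hTt fun h => hne (by simp [h])
  have hle := hTmax (S ∪ T) (mem_filter.mpr ⟨mem_univ _, hne, .inr hST⟩)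
  have hlt : #T < #(S ∪ T) :=
    card_lt_card ⟨subset_union_right, fun h => htailT (h (mem_union_left _ htailS))⟩
  omega

lemma IsRootedArcConnected.erase {B : Finset A} {k : ℕ}
    (hB : IsRootedArcConnected arcs r (k - 1) B) {a : A}
    (ha : ∀ S, IsTight arcs r B k S → a ∉ outArcs arcs B S) :
    IsRootedArcConnected arcs r (k - 1) (B.erase a) := by
  intro S hrS hS
  rw [outArcs, filter_erase, ← outArcs]
  by_cases haS : a ∈ outArcs arcs B S
  · have : k ≤ #(outArcs arcs B S) := by
      by_contra h
      exact ha S ⟨hrS, hS, by omega⟩ haS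
    rw [card_erase_of_mem haS]
    omega
  · rw [erase_eq_of_notMem haS]
    exact hB S hrS hS

lemma IsPartialArborescence.exists_extension {B F : Finset A} {k : ℕ} (hk : 1 ≤ k)
    (hB : IsRootedArcConnected arcs r k B) (hF : IsPartialArborescence arcs r F)
    (hrest : IsRootedArcConnected arcs r (k - 1) (B \ F))
    (hspan : reachedVertices arcs r F ≠ univ) :
    ∃ a ∈ B \ F, IsPartialArborescence arcs r (insert a F) ∧
      reachedVertices arcs r F ⊂ reachedVertices arcs r (insert a F) ∧
      IsRootedArcConnected arcs r (k - 1) (B \ insert a F) := by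
  have hroot : r ∈ reachedVertices arcs r F := mem_insert_self _ _
  obtain ⟨a, haU, hsafe⟩ := exists_mem_outArcs_forall_isTight_notMem hk hrest hspan
    fun S hUS hS => (hB S (hUS hroot) hS).trans <| card_le_card <|
      outArcs_subset_outArcs_sdiff arcs B fun b hb =>
        hUS (mem_insert_of_mem (mem_image_of_mem _ hb))
  obtain ⟨haBF, htail, hhead⟩ := mem_filter.mp haU
  refine ⟨a, haBF, hF.extend htail hhead, ?_, ?_⟩
  · rw [reachedVertices_insert]
    exact ssubset_insert hhead
  · rw [sdiff_insert]
    exact hrest.erase hsafe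

lemma IsPartialArborescence.exists_arborescence {B F : Finset A} {k : ℕ} (hk : 1 ≤ k)
    (hB : IsRootedArcConnected arcs r k B) (hFB : F ⊆ B) (hF : IsPartialArborescence arcs r F)
    (hrest : IsRootedArcConnected arcs r (k - 1) (B \ F)) :
    ∃ F' ⊆ B, IsArborescence arcs r F' ∧ IsRootedArcConnected arcs r (k - 1) (B \ F') := by
  induction hn : #(reachedVertices arcs r F)ᶜ using Nat.strong_induction_on generalizing F with
  | _ n ih =>
  by_cases hspan : reachedVertices arcs r F = univ
  · exact ⟨F, hFB, hF.isArborescence hspan, hrest⟩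
  obtain ⟨a, haBF, ha, hlt, harest⟩ := hF.exists_extension hk hB hrest hspan
  exact ih _ (hn ▸ card_lt_card (compl_ssubset_compl.mpr hlt))
    (insert_subset (mem_sdiff.mp haBF).1 hFB) ha harest rfl

lemma IsRootedArcConnected.exists_arborescence {B : Finset A} {k : ℕ} (hk : 1 ≤ k)
    (hB : IsRootedArcConnected arcs r k B) :
    ∃ F ⊆ B, IsArborescence arcs r F ∧ IsRootedArcConnected arcs r (k - 1) (B \ F) :=
  IsPartialArborescence.exists_arborescence hk hB (empty_subset B) ⟨by simp, by simp, by simp⟩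
    fun S hrS hS => by simpa using (Nat.sub_le k 1).trans (hB S hrS hS)

/-- Edmonds' disjoint arborescence theorem. -/
theorem IsRootedArcConnected.exists_isKArborescence {k : ℕ} {B : Finset A}
    (hB : IsRootedArcConnected arcs r k B) : ∃ T ⊆ B, IsKArborescence arcs r k T := by
  induction k generalizing B with
  | zero =>
    exact ⟨∅, empty_subset _, fun i => i.elim0, fun i => i.elim0, fun i => i.elim0, by simp⟩
  | succ k ih =>
    obtain ⟨F, hFB, hF, hrest⟩ := hB.exists_arborescence (Nat.succ_pos k)
    obtain ⟨T, hTB, hT⟩ := ih hrest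
    exact ⟨F ∪ T, union_subset hFB (hTB.trans sdiff_subset),
      hT.union_of_isArborescence hF (disjoint_of_subset_right hTB disjoint_sdiff)⟩

end Arborescences

section FGC

variable {V E : Type*} [DecidableEq V] {ends : E → V × V} {safeE F : Finset E}

def bidirectedCopies [DecidableEq E] [Fintype E] (safeE F : Finset E) (k : ℕ) :
    Finset (E × Fin (k + 1) × Bool) :=
  univ.filter fun a => a.1 ∈ F ∧ (a.1 ∈ safeE ∨ a.2.1 = 0)

lemma FGCFeasible.lt_card_cutEdges [Fintype V] [DecidableEq E] {q : ℕ}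
    (hF : FGCFeasible ends safeE 1 q F) {S : Finset V} (hS : S.Nonempty) (hSu : S ≠ univ)
    (hunsafe : ∀ e ∈ cutEdges ends F S, e ∉ safeE) : q < #(cutEdges ends F S) := by
  by_contra! h
  have hcut := hF _ hunsafe h S hS hSu
  have hempty : cutEdges ends (F \ cutEdges ends F S) S = ∅ := by
    ext e
    simp only [cutEdges, mem_filter, mem_sdiff]
    tauto
  simp [hempty] at hcut

lemma mem_outArcs_arcEnds {k : ℕ} {B : Finset (E × Fin (k + 1) × Bool)} {S : Finset V}
    {e : E} (he : ¬((ends e).1 ∈ S ↔ (ends e).2 ∈ S)) {i : Fin (k + 1)}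
    (hB : (e, i, decide ((ends e).1 ∈ S)) ∈ B) :
    (e, i, decide ((ends e).1 ∈ S)) ∈ outArcs (arcEnds ends k) B S := by
  refine mem_filter.mpr ⟨hB, ?_⟩
  by_cases h : (ends e).1 ∈ S <;> simp_all [arcEnds]

lemma FGCFeasible.isRootedArcConnected [Fintype V] [DecidableEq E] [Fintype E] {k : ℕ}
    (hF : FGCFeasible ends safeE 1 k F) (r : V) :
    IsRootedArcConnected (arcEnds ends k) r (k + 1) (bidirectedCopies safeE F k) := by
  intro S hrS hSu
  set C := cutEdges ends F S
  let leaving : E → Fin (k + 1) → E × Fin (k + 1) × Bool :=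
    fun e i => (e, i, decide ((ends e).1 ∈ S))
  have hleaving : ∀ e ∈ C, ∀ i, (e ∈ safeE ∨ i = 0) →
      leaving e i ∈ outArcs (arcEnds ends k) (bidirectedCopies safeE F k) S := by
    intro e he i hi
    obtain ⟨heF, hcross⟩ := mem_filter.mp he
    exact mem_outArcs_arcEnds hcross (mem_filter.mpr ⟨mem_univ _, heF, hi⟩)
  by_cases hunsafe : ∀ e ∈ C, e ∉ safeE
  · calc k + 1 ≤ #C := hF.lt_card_cutEdges ⟨r, hrS⟩ hSu hunsafe
      _ = #(C.image (leaving · 0)) :=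
          (card_image_of_injective _ fun e f h => congrArg Prod.fst h).symm
      _ ≤ _ := card_le_card (image_subset_iff.mpr fun e he => hleaving e he 0 (.inr rfl))
  · obtain ⟨e, heC, he⟩ : ∃ e ∈ C, e ∈ safeE := by simpa using hunsafe
    calc k + 1 = #(univ.image (leaving e)) := by
          rw [card_image_of_injective _ fun i j h => by simpa [leaving] using h]; simp
      _ ≤ _ := card_le_card (image_subset_iff.mpr fun i _ => hleaving e heC i (.inl he))

/-- Two distinct arcs on the same edge would form a cycle on at most two vertices. -/
lemma UndirAcyclic.injOn_fst [DecidableEq E] {k : ℕ} {T : Finset (E × Fin (k + 1) × Bool)}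
    (hT : UndirAcyclic (arcEnds ends k) T) :
    Set.InjOn Prod.fst (↑T : Set (E × Fin (k + 1) × Bool)) := by
  intro a ha b hb hab
  rw [mem_coe] at ha hb
  by_contra hne
  have hlt := hT {a, b} (by simp [insert_subset_iff, ha, hb]) (insert_nonempty _ _)
  set s : Finset V := {(ends a.1).1, (ends a.1).2}
  have hends : ∀ x : E × Fin (k + 1) × Bool, x.1 = a.1 →
      (arcEnds ends k x).1 ∈ s ∧ (arcEnds ends k x).2 ∈ s := by
    intro x hx
    unfold arcEnds
    rw [hx]
    split <;> simp [s]
  have hsub : (({a, b} : Finset _).image fun x => (arcEnds ends k x).1) ∪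
      (({a, b} : Finset _).image fun x => (arcEnds ends k x).2) ⊆ s := by
    simp only [union_subset_iff, image_subset_iff, forall_mem_insert, mem_singleton,
      forall_eq]
    exact ⟨⟨(hends a rfl).1, (hends b hab.symm).1⟩,
      ⟨(hends a rfl).2, (hends b hab.symm).2⟩⟩
  have := (card_le_card hsub).trans card_le_two
  rw [card_pair hne] at hlt
  omega

lemma IsKArborescence.sum_le [DecidableEq E] [Fintype E] {k m : ℕ} {r : V}
    {T : Finset (E × Fin (k + 1) × Bool)} (hT : IsKArborescence (arcEnds ends k) r m T)
    (hTB : T ⊆ bidirectedCopies safeE F k) {c : E → ℝ} (hc : ∀ e, 0 ≤ c e) :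
    ∑ a ∈ T, c a.1 ≤ m * ∑ e ∈ F, c e := by
  obtain ⟨P, hP, hdisj, rfl⟩ := hT
  have hPF : ∀ i, ∑ a ∈ P i, c a.1 ≤ ∑ e ∈ F, c e := by
    intro i
    rw [← sum_image (UndirAcyclic.injOn_fst (hP i).1)]
    refine sum_le_sum_of_subset_of_nonneg ?_ fun e _ _ => hc e
    intro e he
    obtain ⟨a, ha, rfl⟩ := mem_image.mp he
    exact (mem_filter.mp (hTB (mem_biUnion.mpr ⟨i, mem_univ _, ha⟩))).2.1
  calc ∑ a ∈ univ.biUnion P, c a.1 = ∑ i, ∑ a ∈ P i, c a.1 :=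
        sum_biUnion fun i _ j _ h => hdisj i j h
    _ ≤ ∑ _ : Fin m, ∑ e ∈ F, c e := sum_le_sum fun i _ => hPF i
    _ = m * ∑ e ∈ F, c e := by simp

end FGC

theorem stmt3_general {V E : Type*} [Fintype V] [DecidableEq V] [Fintype E] [DecidableEq E]
    (ends : E → V × V)
    (safeE : Finset E) (c : E → ℝ) (hc : ∀ e, 0 ≤ c e)
    (k : ℕ) (F : Finset E)
    (hF : FGCFeasible ends safeE 1 k F) (r : V) :
    ∃ T : Finset (E × Fin (k + 1) × Bool),
      (∀ a ∈ T, a.1 ∈ F ∧ (a.1 ∈ safeE ∨ a.2.1 = 0)) ∧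
      IsKArborescence (arcEnds ends k) r (k + 1) T ∧
      ∑ a ∈ T, c a.1 ≤ ((k : ℝ) + 1) * ∑ e ∈ F, c e := by
  obtain ⟨T, hTB, hT⟩ := (hF.isRootedArcConnected r).exists_isKArborescence
  refine ⟨T, fun a ha => (mem_filter.mp (hTB ha)).2, hT, ?_⟩
  exact_mod_cast hT.sum_le hTB hc

theorem stmt3 {V E : Type*} [Fintype V] [DecidableEq V] [Fintype E] [DecidableEq E]
    (ends : E → V × V) (hloop : ∀ e : E, (ends e).1 ≠ (ends e).2)
    (safeE : Finset E) (c : E → ℝ) (hc : ∀ e, 0 ≤ c e)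
    (k : ℕ) (hk : 1 ≤ k) (F : Finset E)
    (hF : FGCFeasible ends safeE 1 k F) (r : V) :
    ∃ T : Finset (E × Fin (k + 1) × Bool),
      (∀ a ∈ T, a.1 ∈ F ∧ (a.1 ∈ safeE ∨ a.2.1 = 0)) ∧
      IsKArborescence (arcEnds ends k) r (k + 1) T ∧
      ∑ a ∈ T, c a.1 ≤ ((k : ℝ) + 1) * ∑ e ∈ F, c e :=
  stmt3_general ends safeE c hc k F hF r
end

section
/- Let (G=(V,E), u, c, k) be a Cap-k-ECSS instance with capacities u_e ∈ {1,…,k}, let r ∈ V, and let D=(V,A) be the directed multigraph obtained from G by replacing every edge xy ∈ E by u_{xy} bidirected pairs of arcs (x,y),(y,x), each arc arising from an edge e having cost c_e. If T' is an r-rooted k-arborescence in D, then the edge set F' = { e ∈ E : at least one of the arcs arising from e belongs to T' } is feasible for the Cap-k-ECSS instance and c(F') ≤ c(T'). -/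
/-- `F` is feasible for the Cap-k-ECSS instance: every nonempty proper cut has total
capacity at least `k` from the edges of `F` crossing it. -/
def CapFeasible {V E : Type*} [Fintype V] [DecidableEq V] (ends : E → V × V)
    (u : E → ℕ) (k : ℕ) (F : Finset E) : Prop :=
  ∀ R : Finset V, R.Nonempty → R ≠ Finset.univ → k ≤ ∑ e ∈ cutEdges ends F R, u e

/-- The arc `(e, i, b)` arising from edge `e`: `b` chooses the orientation. -/
def capArcEnds {V E : Type*} (ends : E → V × V) (k : ℕ) (a : E × Fin k × Bool) :
    V × V :=
  if a.2.2 then ends a.1 else ((ends a.1).2, (ends a.1).1)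

theorem stmt6 {V E : Type*} [Fintype V] [DecidableEq V] [Fintype E] [DecidableEq E]
    (ends : E → V × V) (hloop : ∀ e : E, (ends e).1 ≠ (ends e).2)
    (u : E → ℕ) (c : E → ℝ) (hc : ∀ e, 0 ≤ c e)
    (k : ℕ) (hk : 1 ≤ k) (hu : ∀ e, 1 ≤ u e ∧ u e ≤ k) (r : V)
    (T' : Finset (E × Fin k × Bool))
    (hT'D : ∀ a ∈ T', (a.2.1 : ℕ) < u a.1)
    (hT' : IsKArborescence (capArcEnds ends k) r k T') :
    CapFeasible ends u k (T'.image Prod.fst) ∧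
      ∑ e ∈ T'.image Prod.fst, c e ≤ ∑ a ∈ T', c a.1 := by
  classical
  obtain ⟨P, hPArb, hPdisj, hPunion⟩ := hT'
  constructor
  · intro R hRne hRuniv
    set Q : V → Prop := fun x => (x ∈ R ↔ r ∈ R) with hQ
    have hQr : Q r := Iff.rfl
    obtain ⟨v, hv⟩ : ∃ v, ¬ Q v := by
      by_cases hr : r ∈ R
      · obtain ⟨v, hv⟩ : ∃ v, v ∉ R := by
          by_contra h
          push_neg at h
          exact hRuniv (Finset.eq_univ_iff_forall.mpr h)
        exact ⟨v, by simp [hQ, hv, hr]⟩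
      · obtain ⟨v, hv⟩ := hRne
        exact ⟨v, by simp [hQ, hv, hr]⟩
    set C := T'.filter (fun a => Q (capArcEnds ends k a).1 ∧ ¬ Q (capArcEnds ends k a).2)
      with hCdef
    have hstep : ∀ i : Fin k, ∃ a ∈ P i, a ∈ C := by
      intro i
      obtain ⟨hacyc, hreach⟩ := hPArb i
      have key : ∀ w, Relation.ReflTransGen
          (fun x y => ∃ a ∈ P i, capArcEnds ends k a = (x, y)) r w → ¬ Q w →
          ∃ a ∈ P i, Q (capArcEnds ends k a).1 ∧ ¬ Q (capArcEnds ends k a).2 := by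
        intro w hw
        induction hw with
        | refl => intro h; exact absurd hQr h
        | @tail b cvert hb hstep ih =>
          intro hcc
          obtain ⟨a, ha, haeq⟩ := hstep
          by_cases hQb : Q b
          · exact ⟨a, ha, by rw [haeq]; exact ⟨hQb, hcc⟩⟩
          · exact ih hQb
      obtain ⟨a, ha, h1, h2⟩ := key v (hreach v) hv
      have haT : a ∈ T' := by
        rw [← hPunion]; exact Finset.mem_biUnion.mpr ⟨i, Finset.mem_univ _, ha⟩
      exact ⟨a, ha, Finset.mem_filter.mpr ⟨haT, h1, h2⟩⟩
    have hCeq : C = Finset.univ.biUnion (fun i => P i ∩ C) := by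
      ext a
      simp only [Finset.mem_biUnion, Finset.mem_inter, Finset.mem_univ, true_and]
      constructor
      · intro haC
        have haT : a ∈ T' := (Finset.mem_filter.mp haC).1
        rw [← hPunion] at haT
        obtain ⟨i, _, hi⟩ := Finset.mem_biUnion.mp haT
        exact ⟨i, hi, haC⟩
      · rintro ⟨i, h, _⟩; exact ‹_›
    have hkC : k ≤ C.card := by
      have hdisj : ∀ i ∈ (Finset.univ : Finset (Fin k)), ∀ j ∈ Finset.univ, i ≠ j →
          Disjoint (P i ∩ C) (P j ∩ C) :=
        fun i _ j _ hij =>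
          (hPdisj i j hij).mono Finset.inter_subset_left Finset.inter_subset_left
      calc k = ∑ _i : Fin k, 1 := by simp
        _ ≤ ∑ i : Fin k, (P i ∩ C).card := by
            refine Finset.sum_le_sum fun i _ => ?_
            obtain ⟨a, ha, haC⟩ := hstep i
            exact Finset.card_pos.mpr ⟨a, Finset.mem_inter.mpr ⟨ha, haC⟩⟩
        _ = C.card := by
            conv_rhs => rw [hCeq]
            exact (Finset.card_biUnion hdisj).symm
    have hmap : ∀ a ∈ C, a.1 ∈ cutEdges ends (T'.image Prod.fst) R := by
      intro a ha
      obtain ⟨haT, h1, h2⟩ := Finset.mem_filter.mp ha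
      refine Finset.mem_filter.mpr ⟨Finset.mem_image_of_mem _ haT, ?_⟩
      rcases a with ⟨e, i, b⟩
      cases b <;> simp only [capArcEnds, if_true, if_false, hQ] at h1 h2 <;>
        simp only [] <;> tauto
    have hcard : C.card ≤ ∑ e ∈ cutEdges ends (T'.image Prod.fst) R, u e := by
      rw [Finset.card_eq_sum_card_fiberwise hmap]
      refine Finset.sum_le_sum fun e he => ?_
      have : ((Finset.range (u e)).card = u e) := Finset.card_range _
      rw [← this]
      refine Finset.card_le_card_of_injOn (fun a => (a.2.1 : ℕ)) ?_ ?_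
      · intro a ha
        obtain ⟨haC, hae⟩ := Finset.mem_filter.mp ha
        have haT : a ∈ T' := (Finset.mem_filter.mp haC).1
        exact Finset.mem_range.mpr (hae ▸ hT'D a haT)
      · rintro ⟨e1, i1, b1⟩ ha ⟨e1', i1', b1'⟩ ha' hval
        obtain ⟨haC, hae⟩ := Finset.mem_filter.mp ha
        obtain ⟨haC', hae'⟩ := Finset.mem_filter.mp ha'
        obtain ⟨-, h1, h2⟩ := Finset.mem_filter.mp haC
        obtain ⟨-, h1', h2'⟩ := Finset.mem_filter.mp haC'
        simp only at hae hae' hval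
        subst hae; subst hae'
        have hi : i1 = i1' := Fin.ext hval
        subst hi
        have hb : b1 = b1' := by
          unfold capArcEnds at h1 h2 h1' h2'
          cases b1 <;> cases b1' <;> simp only [if_true, if_false] at h1 h2 h1' h2' <;>
            first | rfl | (exact absurd h1' h2) | (exact absurd h1 h2')
        rw [hb]
    exact le_trans hkC hcard
  · have hmapsto : ∀ a ∈ T', a.1 ∈ T'.image Prod.fst :=
      fun a ha => Finset.mem_image_of_mem _ ha
    rw [← Finset.sum_fiberwise_of_maps_to hmapsto (fun a => c a.1)]
    refine Finset.sum_le_sum fun e he => ?_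
    obtain ⟨a, ha, hae⟩ := Finset.mem_image.mp he
    have hne : (T'.filter (fun a => a.1 = e)).Nonempty :=
      ⟨a, Finset.mem_filter.mpr ⟨ha, hae⟩⟩
    have : ∑ a ∈ T'.filter (fun a => a.1 = e), c a.1
        = (T'.filter (fun a => a.1 = e)).card • c e := by
      rw [Finset.sum_congr rfl (fun a ha => by
        rw [(Finset.mem_filter.mp ha).2]), Finset.sum_const]
    rw [this]
    have hcard1 : 1 ≤ (T'.filter (fun a => a.1 = e)).card := Finset.card_pos.mpr hne
    calc c e = (1 : ℕ) • c e := by simp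
      _ ≤ (T'.filter (fun a => a.1 = e)).card • c e := by
          exact nsmul_le_nsmul_left (hc e) hcard1
end

section
/- Let k ≥ 1 and let H₁=(V,F₁) be a k-edge-connected spanning subgraph of G. Define f : 2^V → {0,1} by f(S) = 1 if and only if ∅ ≠ S ⊊ V, |F₁ ∩ δ(S)| = k, and F₁ ∩ δ(S) contains at least one unsafe edge. Then f is uncrossable: f(V) = 0; f(S) = f(V∖S) for all S ⊆ V; and for any A, B ⊆ V with f(A) = f(B) = 1, either f(A∩B) = f(A∪B) = 1 or f(A∖B) = f(B∖A) = 1. -/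
/-- The residual requirement function: `uncrossF … S` holds iff `S` is a nonempty proper
vertex set whose cut in `(V, F₁)` has exactly `k` edges, at least one of them unsafe. -/
def uncrossF {V E : Type*} [Fintype V] [DecidableEq V] (ends : E → V × V)
    (safeE : Finset E) (k : ℕ) (F₁ : Finset E) (S : Finset V) : Prop :=
  S.Nonempty ∧ S ≠ Finset.univ ∧ (cutEdges ends F₁ S).card = k ∧
    ∃ e ∈ cutEdges ends F₁ S, e ∉ safeE

section Aux
variable {V E : Type*} [Fintype V] [DecidableEq V] (ends : E → V × V)

lemma cutEdges_compl (F : Finset E) (S : Finset V) :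
    cutEdges ends F Sᶜ = cutEdges ends F S := by
  ext e; simp only [cutEdges, Finset.mem_filter, Finset.mem_compl]; tauto

lemma uncross_compl_mp (safeE : Finset E) (k : ℕ) (F₁ : Finset E) (S : Finset V)
    (h : uncrossF ends safeE k F₁ S) : uncrossF ends safeE k F₁ Sᶜ := by
  obtain ⟨h1, h2, h3, h4⟩ := h
  refine ⟨?_, ?_, by rwa [cutEdges_compl], by rwa [cutEdges_compl]⟩
  · rw [Finset.nonempty_iff_ne_empty, Ne, Finset.compl_eq_empty_iff]; exact h2
  · rw [Ne, Finset.compl_eq_univ_iff]; exact h1.ne_empty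

lemma key1 (p q r s : Prop) [Decidable p] [Decidable q] [Decidable r] [Decidable s] :
    ((if ¬((p ∧ q) ↔ (r ∧ s)) then 1 else 0) + (if ¬((p ∨ q) ↔ (r ∨ s)) then 1 else 0))
      + 2 * (if (p ∧ ¬q ∧ ¬r ∧ s) ∨ (¬p ∧ q ∧ r ∧ ¬s) then 1 else 0)
    = (if ¬(p ↔ r) then 1 else 0) + (if ¬(q ↔ s) then 1 else 0) := by
  by_cases hp : p <;> by_cases hq : q <;> by_cases hr : r <;> by_cases hs : s <;>
    simp [hp, hq, hr, hs]

lemma key2 (p q r s : Prop) [Decidable p] [Decidable q] [Decidable r] [Decidable s] :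
    ((if ¬((p ∧ ¬q) ↔ (r ∧ ¬s)) then 1 else 0) + (if ¬((q ∧ ¬p) ↔ (s ∧ ¬r)) then 1 else 0))
      + 2 * (if (p ∧ q ∧ ¬r ∧ ¬s) ∨ (¬p ∧ ¬q ∧ r ∧ s) then 1 else 0)
    = (if ¬(p ↔ r) then 1 else 0) + (if ¬(q ↔ s) then 1 else 0) := by
  by_cases hp : p <;> by_cases hq : q <;> by_cases hr : r <;> by_cases hs : s <;>
    simp [hp, hq, hr, hs]

lemma count1 (F₁ : Finset E) (A B : Finset V) :
    ((cutEdges ends F₁ (A ∩ B)).card + (cutEdges ends F₁ (A ∪ B)).card)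
      + 2 * (F₁.filter (fun e =>
          ((ends e).1 ∈ A ∧ (ends e).1 ∉ B ∧ (ends e).2 ∉ A ∧ (ends e).2 ∈ B)
          ∨ ((ends e).1 ∉ A ∧ (ends e).1 ∈ B ∧ (ends e).2 ∈ A ∧ (ends e).2 ∉ B))).card
    = (cutEdges ends F₁ A).card + (cutEdges ends F₁ B).card := by
  unfold cutEdges
  rw [Finset.card_filter, Finset.card_filter, Finset.card_filter, Finset.card_filter,
    Finset.card_filter, Finset.mul_sum, ← Finset.sum_add_distrib, ← Finset.sum_add_distrib,
    ← Finset.sum_add_distrib]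
  refine Finset.sum_congr rfl fun e _ => ?_
  simp only [Finset.mem_inter, Finset.mem_union]
  rw [← key1 ((ends e).1 ∈ A) ((ends e).1 ∈ B) ((ends e).2 ∈ A) ((ends e).2 ∈ B)]

lemma count2 (F₁ : Finset E) (A B : Finset V) :
    ((cutEdges ends F₁ (A \ B)).card + (cutEdges ends F₁ (B \ A)).card)
      + 2 * (F₁.filter (fun e =>
          ((ends e).1 ∈ A ∧ (ends e).1 ∈ B ∧ (ends e).2 ∉ A ∧ (ends e).2 ∉ B)
          ∨ ((ends e).1 ∉ A ∧ (ends e).1 ∉ B ∧ (ends e).2 ∈ A ∧ (ends e).2 ∈ B))).card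
    = (cutEdges ends F₁ A).card + (cutEdges ends F₁ B).card := by
  unfold cutEdges
  rw [Finset.card_filter, Finset.card_filter, Finset.card_filter, Finset.card_filter,
    Finset.card_filter, Finset.mul_sum, ← Finset.sum_add_distrib, ← Finset.sum_add_distrib,
    ← Finset.sum_add_distrib]
  refine Finset.sum_congr rfl fun e _ => ?_
  simp only [Finset.mem_sdiff]
  rw [← key2 ((ends e).1 ∈ A) ((ends e).1 ∈ B) ((ends e).2 ∈ A) ((ends e).2 ∈ B)]

lemma dichoA (p q r s : Prop) (hpr : ¬(p ↔ r))
    (h23 : ¬((p ∧ ¬q ∧ ¬r ∧ s) ∨ (¬p ∧ q ∧ r ∧ ¬s)))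
    (h14 : ¬((p ∧ q ∧ ¬r ∧ ¬s) ∨ (¬p ∧ ¬q ∧ r ∧ s))) :
    (¬((p ∧ q) ↔ (r ∧ s)) ∧ ¬((q ∧ ¬p) ↔ (s ∧ ¬r))) ∨
    (¬((p ∧ ¬q) ↔ (r ∧ ¬s)) ∧ ¬((p ∨ q) ↔ (r ∨ s))) := by
  by_cases hp : p <;> by_cases hq : q <;> by_cases hr : r <;> by_cases hs : s <;> simp_all

lemma dichoB (p q r s : Prop) (hqs : ¬(q ↔ s))
    (h23 : ¬((p ∧ ¬q ∧ ¬r ∧ s) ∨ (¬p ∧ q ∧ r ∧ ¬s)))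
    (h14 : ¬((p ∧ q ∧ ¬r ∧ ¬s) ∨ (¬p ∧ ¬q ∧ r ∧ s))) :
    (¬((p ∧ q) ↔ (r ∧ s)) ∧ ¬((p ∧ ¬q) ↔ (r ∧ ¬s))) ∨
    (¬((q ∧ ¬p) ↔ (s ∧ ¬r)) ∧ ¬((p ∨ q) ↔ (r ∨ s))) := by
  by_cases hp : p <;> by_cases hq : q <;> by_cases hr : r <;> by_cases hs : s <;> simp_all

end Aux

theorem stmt10 {V E : Type*} [Fintype V] [DecidableEq V] [Fintype E] [DecidableEq E]
    (ends : E → V × V) (hloop : ∀ e : E, (ends e).1 ≠ (ends e).2)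
    (safeE : Finset E) (k : ℕ) (hk : 1 ≤ k) (F₁ : Finset E)
    (hconn : ∀ S : Finset V, S.Nonempty → S ≠ Finset.univ →
      k ≤ (cutEdges ends F₁ S).card) :
    ¬ uncrossF ends safeE k F₁ Finset.univ ∧
    (∀ S : Finset V, uncrossF ends safeE k F₁ S ↔ uncrossF ends safeE k F₁ Sᶜ) ∧
    ∀ A B : Finset V, uncrossF ends safeE k F₁ A → uncrossF ends safeE k F₁ B →
      (uncrossF ends safeE k F₁ (A ∩ B) ∧ uncrossF ends safeE k F₁ (A ∪ B)) ∨
      (uncrossF ends safeE k F₁ (A \ B) ∧ uncrossF ends safeE k F₁ (B \ A)) := by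
  have hsymm : ∀ S : Finset V, uncrossF ends safeE k F₁ S ↔ uncrossF ends safeE k F₁ Sᶜ := by
    intro S
    constructor
    · exact uncross_compl_mp ends safeE k F₁ S
    · intro h
      have := uncross_compl_mp ends safeE k F₁ Sᶜ h
      rwa [compl_compl] at this
  refine ⟨?_, hsymm, ?_⟩
  · rintro ⟨-, h, -⟩; exact h rfl
  intro A B hA hB
  by_cases hAsubB : A \ B = ∅
  · left
    have hsub : A ⊆ B := Finset.sdiff_eq_empty_iff_subset.mp hAsubB
    rw [Finset.inter_eq_left.mpr hsub, Finset.union_eq_right.mpr hsub]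
    exact ⟨hA, hB⟩
  by_cases hBsubA : B \ A = ∅
  · left
    have hsub : B ⊆ A := Finset.sdiff_eq_empty_iff_subset.mp hBsubA
    rw [Finset.inter_eq_right.mpr hsub, Finset.union_eq_left.mpr hsub]
    exact ⟨hB, hA⟩
  by_cases hdisj : A ∩ B = ∅
  · right
    have h1 : A \ B = A := by
      ext x; simp only [Finset.mem_sdiff]
      refine ⟨fun h => h.1, fun h => ⟨h, fun hxB => ?_⟩⟩
      have : x ∈ A ∩ B := Finset.mem_inter.mpr ⟨h, hxB⟩
      simp [hdisj] at this
    have h2 : B \ A = B := by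
      ext x; simp only [Finset.mem_sdiff]
      refine ⟨fun h => h.1, fun h => ⟨h, fun hxA => ?_⟩⟩
      have : x ∈ A ∩ B := Finset.mem_inter.mpr ⟨hxA, h⟩
      simp [hdisj] at this
    rw [h1, h2]
    exact ⟨hA, hB⟩
  by_cases huniv : A ∪ B = Finset.univ
  · right
    have h1 : A \ B = Bᶜ := by
      ext x
      simp only [Finset.mem_sdiff, Finset.mem_compl]
      refine ⟨fun h => h.2, fun h => ⟨?_, h⟩⟩
      have : x ∈ A ∪ B := by rw [huniv]; exact Finset.mem_univ x
      rcases Finset.mem_union.mp this with h' | h'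
      · exact h'
      · exact absurd h' h
    have h2 : B \ A = Aᶜ := by
      ext x
      simp only [Finset.mem_sdiff, Finset.mem_compl]
      refine ⟨fun h => h.2, fun h => ⟨?_, h⟩⟩
      have : x ∈ A ∪ B := by rw [huniv]; exact Finset.mem_univ x
      rcases Finset.mem_union.mp this with h' | h'
      · exact absurd h' h
      · exact h'
    rw [h1, h2]
    exact ⟨(hsymm B).mp hB, (hsymm A).mp hA⟩
  -- general case: all four corner regions nonempty
  obtain ⟨hAne, hAuniv, hAk, eA, heA, heAu⟩ := hA
  obtain ⟨hBne, hBuniv, hBk, eB, heB, heBu⟩ := hB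
  have hcapne : (A ∩ B).Nonempty := Finset.nonempty_iff_ne_empty.mpr hdisj
  have hsdABne : (A \ B).Nonempty := Finset.nonempty_iff_ne_empty.mpr hAsubB
  have hsdBAne : (B \ A).Nonempty := Finset.nonempty_iff_ne_empty.mpr hBsubA
  have hcupne : (A ∪ B).Nonempty := hAne.mono Finset.subset_union_left
  have hcapuniv : A ∩ B ≠ Finset.univ := by
    intro h
    exact huniv (Finset.univ_subset_iff.mp (h ▸ Finset.inter_subset_union))
  have hsdABuniv : A \ B ≠ Finset.univ := by
    intro h
    obtain ⟨x, hx⟩ := hBne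
    have hx2 : x ∈ A \ B := by rw [h]; exact Finset.mem_univ x
    exact (Finset.mem_sdiff.mp hx2).2 hx
  have hsdBAuniv : B \ A ≠ Finset.univ := by
    intro h
    obtain ⟨x, hx⟩ := hAne
    have hx2 : x ∈ B \ A := by rw [h]; exact Finset.mem_univ x
    exact (Finset.mem_sdiff.mp hx2).2 hx
  have hc1 := hconn (A ∩ B) hcapne hcapuniv
  have hc2 := hconn (A ∪ B) hcupne huniv
  have hc3 := hconn (A \ B) hsdABne hsdABuniv
  have hc4 := hconn (B \ A) hsdBAne hsdBAuniv
  have hcount1 := count1 ends F₁ A B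
  have hcount2 := count2 ends F₁ A B
  rw [hAk, hBk] at hcount1 hcount2
  have hcapk : (cutEdges ends F₁ (A ∩ B)).card = k := by omega
  have hcupk : (cutEdges ends F₁ (A ∪ B)).card = k := by omega
  have hsdABk : (cutEdges ends F₁ (A \ B)).card = k := by omega
  have hsdBAk : (cutEdges ends F₁ (B \ A)).card = k := by omega
  have h23card : (F₁.filter (fun e =>
      ((ends e).1 ∈ A ∧ (ends e).1 ∉ B ∧ (ends e).2 ∉ A ∧ (ends e).2 ∈ B)
      ∨ ((ends e).1 ∉ A ∧ (ends e).1 ∈ B ∧ (ends e).2 ∈ A ∧ (ends e).2 ∉ B))).card = 0 := by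
    omega
  have h14card : (F₁.filter (fun e =>
      ((ends e).1 ∈ A ∧ (ends e).1 ∈ B ∧ (ends e).2 ∉ A ∧ (ends e).2 ∉ B)
      ∨ ((ends e).1 ∉ A ∧ (ends e).1 ∉ B ∧ (ends e).2 ∈ A ∧ (ends e).2 ∈ B))).card = 0 := by
    omega
  rw [Finset.card_eq_zero, Finset.filter_eq_empty_iff] at h23card h14card
  have memcut : ∀ (e : E) (S : Finset V), e ∈ F₁ →
      ¬((ends e).1 ∈ S ↔ (ends e).2 ∈ S) → e ∈ cutEdges ends F₁ S :=
    fun e S he hc => Finset.mem_filter.mpr ⟨he, hc⟩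
  obtain ⟨heA1, heA2⟩ := Finset.mem_filter.mp heA
  obtain ⟨heB1, heB2⟩ := Finset.mem_filter.mp heB
  have dA := dichoA ((ends eA).1 ∈ A) ((ends eA).1 ∈ B) ((ends eA).2 ∈ A) ((ends eA).2 ∈ B)
    heA2 (h23card heA1) (h14card heA1)
  have dB := dichoB ((ends eB).1 ∈ A) ((ends eB).1 ∈ B) ((ends eB).2 ∈ A) ((ends eB).2 ∈ B)
    heB2 (h23card heB1) (h14card heB1)
  rcases dA with ⟨dA1, dA2⟩ | ⟨dA1, dA2⟩ <;> rcases dB with ⟨dB1, dB2⟩ | ⟨dB1, dB2⟩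
  · -- eA: A∩B & B\A ; eB: A∩B & A\B  ⇒ right pair
    right
    refine ⟨⟨hsdABne, hsdABuniv, hsdABk, eB, memcut eB (A \ B) heB1 ?_, heBu⟩,
      ⟨hsdBAne, hsdBAuniv, hsdBAk, eA, memcut eA (B \ A) heA1 ?_, heAu⟩⟩
    · simpa [Finset.mem_sdiff] using dB2
    · simpa [Finset.mem_sdiff] using dA2
  · -- eA: A∩B & B\A ; eB: B\A & A∪B ⇒ left pair
    left
    refine ⟨⟨hcapne, hcapuniv, hcapk, eA, memcut eA (A ∩ B) heA1 ?_, heAu⟩,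
      ⟨hcupne, huniv, hcupk, eB, memcut eB (A ∪ B) heB1 ?_, heBu⟩⟩
    · simpa [Finset.mem_inter] using dA1
    · simpa [Finset.mem_union] using dB2
  · -- eA: A\B & A∪B ; eB: A∩B & A\B ⇒ left pair
    left
    refine ⟨⟨hcapne, hcapuniv, hcapk, eB, memcut eB (A ∩ B) heB1 ?_, heBu⟩,
      ⟨hcupne, huniv, hcupk, eA, memcut eA (A ∪ B) heA1 ?_, heAu⟩⟩
    · simpa [Finset.mem_inter] using dB1
    · simpa [Finset.mem_union] using dA2
  · -- eA: A\B & A∪B ; eB: B\A & A∪B ⇒ right pair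
    right
    refine ⟨⟨hsdABne, hsdABuniv, hsdABk, eA, memcut eA (A \ B) heA1 ?_, heAu⟩,
      ⟨hsdBAne, hsdBAuniv, hsdBAk, eB, memcut eB (B \ A) heB1 ?_, heBu⟩⟩
    · simpa [Finset.mem_sdiff] using dA1
    · simpa [Finset.mem_sdiff] using dB1
end

section
/- Let k ≥ 1, let F* ⊆ E be a feasible solution for (k,1)-FGC, and let F₁ ⊆ E be an edge set such that (V,F₁) is k-edge-connected. Then for every nonempty S ⊊ V such that |F₁ ∩ δ(S)| = k and F₁ ∩ δ(S) contains an unsafe edge, we have (F* ∖ F₁) ∩ δ(S) ≠ ∅. -/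
theorem stmt11 {V E : Type*} [Fintype V] [DecidableEq V] [Fintype E] [DecidableEq E]
    (ends : E → V × V) (hloop : ∀ e : E, (ends e).1 ≠ (ends e).2)
    (safeE : Finset E) (k : ℕ) (hk : 1 ≤ k)
    (Fstar F₁ : Finset E)
    (hFstar : FGCFeasible ends safeE k 1 Fstar)
    (hF₁ : ∀ S : Finset V, S.Nonempty → S ≠ Finset.univ →
      k ≤ (cutEdges ends F₁ S).card)
    (S : Finset V) (hS : S.Nonempty) (hS' : S ≠ Finset.univ)
    (hcard : (cutEdges ends F₁ S).card = k)
    (hunsafe : ∃ e ∈ cutEdges ends F₁ S, e ∉ safeE) :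
    (cutEdges ends (Fstar \ F₁) S).Nonempty := by
  obtain ⟨u, hu, husafe⟩ := hunsafe
  by_contra hempty
  rw [Finset.not_nonempty_iff_eq_empty] at hempty
  -- cutEdges of Fstar ⊆ cutEdges of F₁
  have hsub : cutEdges ends Fstar S ⊆ cutEdges ends F₁ S := by
    intro e he
    by_contra he1
    have : e ∈ cutEdges ends (Fstar \ F₁) S := by
      simp only [cutEdges, Finset.mem_filter, Finset.mem_sdiff] at he he1 ⊢
      exact ⟨⟨he.1, fun h => he1 ⟨h, he.2⟩⟩, he.2⟩
    rw [hempty] at this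
    exact absurd this (Finset.notMem_empty e)
  have key := hFstar {u} (by simpa using husafe) (by simp) S hS hS'
  have hdiff : cutEdges ends (Fstar \ {u}) S ⊆ (cutEdges ends F₁ S).erase u := by
    intro e he
    simp only [cutEdges, Finset.mem_filter, Finset.mem_sdiff, Finset.mem_singleton] at he
    refine Finset.mem_erase.mpr ⟨he.1.2, hsub ?_⟩
    simp only [cutEdges, Finset.mem_filter]
    exact ⟨he.1.1, he.2⟩
  have hlt : (cutEdges ends (Fstar \ {u}) S).card ≤ k - 1 := by
    calc (cutEdges ends (Fstar \ {u}) S).card ≤ ((cutEdges ends F₁ S).erase u).card :=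
          Finset.card_le_card hdiff
      _ = k - 1 := by rw [Finset.card_erase_of_mem hu, hcard]
  omega
end

section
/- Let G'=(V',E') be a connected undirected multigraph without self-loops, let W ⊆ V' with |W| even, and let B ⊆ E' be an edge set such that |B ∩ δ(S)| ≥ 2 for every nonempty S ⊊ V'. Then there exists a W-join J ⊆ E' with |J| ≤ |B|/2. -/
/-- The degree of `v` in the subgraph with edge set `J` (no self-loops assumed). -/
def degIn {V E : Type*} [DecidableEq V] (ends : E → V × V) (J : Finset E) (v : V) : ℕ :=
  (J.filter fun e => (ends e).1 = v ∨ (ends e).2 = v).card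

open Finset
open scoped symmDiff

theorem Finset.odd_card_symmDiff_iff {α : Type*} [DecidableEq α] (s t : Finset α) :
    Odd #(s ∆ t) ↔ ¬(Odd #s ↔ Odd #t) := by
  have hunion := card_union_add_card_inter s t
  have hsdiff := card_sdiff_of_subset (inter_subset_union (s := s) (t := t))
  have hle := card_le_card (inter_subset_union (s := s) (t := t))
  rw [symmDiff_eq_sup_sdiff_inf, sup_eq_union, inf_eq_inter, hsdiff]
  simp only [Nat.odd_iff]
  omega

theorem Finset.inter_symmDiff_distrib_left {α : Type*} [DecidableEq α] (s t u : Finset α) :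
    s ∩ (t ∆ u) = (s ∩ t) ∆ (s ∩ u) :=
  inf_symmDiff_distrib_left s t u

theorem Finset.inter_symmDiff_distrib_right {α : Type*} [DecidableEq α] (s t u : Finset α) :
    (s ∆ t) ∩ u = (s ∩ u) ∆ (t ∩ u) :=
  inf_symmDiff_distrib_right s t u

theorem Finset.odd_card_pair_inter_iff {α : Type*} [DecidableEq α] {a b : α} (hab : a ≠ b)
    (s : Finset α) : Odd #({a, b} ∩ s) ↔ ¬(a ∈ s ↔ b ∈ s) := by
  by_cases ha : a ∈ s <;> by_cases hb : b ∈ s <;>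
    simp [ha, hb, insert_inter_of_mem, insert_inter_of_notMem, hab]

theorem Finset.two_mul_card_filter_mem_symmDiff {α : Type*} [DecidableEq α]
    {𝒵 : Finset (Finset α)} (hsymmDiff : ∀ Z ∈ 𝒵, ∀ Z' ∈ 𝒵, Z ∆ Z' ∈ 𝒵)
    (J : Finset α) {e : α} {Zₑ : Finset α} (hZₑ : Zₑ ∈ 𝒵) (he : e ∈ Zₑ) :
    2 * #{Z ∈ 𝒵 | e ∈ J ∆ Z} = #𝒵 := by
  have hflip : ∀ Z, e ∈ J ∆ (Z ∆ Zₑ) ↔ e ∉ J ∆ Z := fun Z => by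
    rw [← symmDiff_assoc]; simp only [mem_symmDiff]; tauto
  have hswap : #{Z ∈ 𝒵 | e ∈ J ∆ Z} = #{Z ∈ 𝒵 | e ∉ J ∆ Z} :=
    card_nbij' (· ∆ Zₑ) (· ∆ Zₑ)
      (fun Z hZ => by
        simp only [coe_filter, Set.mem_ofPred_eq] at hZ ⊢
        refine ⟨hsymmDiff Z hZ.1 Zₑ hZₑ, ?_⟩
        rw [← hflip, symmDiff_symmDiff_cancel_right]
        exact hZ.2)
      (fun Z hZ => by
        simp only [coe_filter, Set.mem_ofPred_eq] at hZ ⊢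
        exact ⟨hsymmDiff Z hZ.1 Zₑ hZₑ, (hflip Z).2 hZ.2⟩)
      (fun Z _ => symmDiff_symmDiff_cancel_right Zₑ Z)
      (fun Z _ => symmDiff_symmDiff_cancel_right Zₑ Z)
  rw [two_mul]
  nth_rw 2 [hswap]
  exact card_filter_add_card_filter_not _

theorem Finset.exists_two_mul_card_symmDiff_le {α : Type*} [DecidableEq α]
    {B J : Finset α} {𝒵 : Finset (Finset α)} (hJ : J ⊆ B) (h𝒵B : ∀ Z ∈ 𝒵, Z ⊆ B)
    (h𝒵 : 𝒵.Nonempty) (hsymmDiff : ∀ Z ∈ 𝒵, ∀ Z' ∈ 𝒵, Z ∆ Z' ∈ 𝒵)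
    (hcover : ∀ e ∈ B, ∃ Z ∈ 𝒵, e ∈ Z) :
    ∃ Z ∈ 𝒵, 2 * #(J ∆ Z) ≤ #B := by
  refine exists_le_of_sum_le h𝒵 (le_of_eq ?_)
  calc ∑ Z ∈ 𝒵, 2 * #(J ∆ Z)
      = 2 * ∑ Z ∈ 𝒵, #(B.bipartiteAbove (fun Z e => e ∈ J ∆ Z) Z) := by
        rw [mul_sum]
        refine sum_congr rfl fun Z hZ => ?_
        rw [bipartiteAbove, filter_mem_eq_inter, inter_eq_right.2
          (symmDiff_subset_union.trans (union_subset hJ (h𝒵B Z hZ)))]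
    _ = 2 * ∑ e ∈ B, #{Z ∈ 𝒵 | e ∈ J ∆ Z} := by
        rw [sum_card_bipartiteAbove_eq_sum_card_bipartiteBelow]; rfl
    _ = ∑ Z ∈ 𝒵, #B := by
        rw [mul_sum, sum_const, smul_eq_mul, mul_comm, ← sum_const_nat fun e he => ?_]
        obtain ⟨Zₑ, hZₑ, heZ⟩ := hcover e he
        exact two_mul_card_filter_mem_symmDiff hsymmDiff J hZₑ heZ

section Joins

variable {V E : Type*} [DecidableEq V] (ends : E → V × V)

def IsJoin (T : Finset V) (J : Finset E) : Prop :=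
  ∀ v, v ∈ T ↔ Odd (degIn ends J v)

variable {ends}

theorem odd_degIn_symmDiff [DecidableEq E] (J K : Finset E) (v : V) :
    Odd (degIn ends (J ∆ K) v) ↔ ¬(Odd (degIn ends J v) ↔ Odd (degIn ends K v)) := by
  unfold degIn
  rw [← odd_card_symmDiff_iff]
  congr! 2
  ext e
  simp only [mem_filter, mem_symmDiff]
  tauto

theorem IsJoin.symmDiff [DecidableEq E] {T T' : Finset V} {J J' : Finset E}
    (h : IsJoin ends T J) (h' : IsJoin ends T' J') :
    IsJoin ends (T ∆ T') (J ∆ J') := fun v => by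
  rw [mem_symmDiff, odd_degIn_symmDiff, ← h v, ← h' v]
  tauto

theorem cutEdges_eq_empty_iff {F : Finset E} {S : Finset V} :
    cutEdges ends F S = ∅ ↔ ∀ e ∈ F, ((ends e).1 ∈ S ↔ (ends e).2 ∈ S) := by
  simp [cutEdges, filter_eq_empty_iff]

theorem cutEdges_symmDiff_eq_empty {F : Finset E} {S S' : Finset V}
    (h : cutEdges ends F S = ∅) (h' : cutEdges ends F S' = ∅) :
    cutEdges ends F (S ∆ S') = ∅ := by
  rw [cutEdges_eq_empty_iff] at h h' ⊢
  intro e he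
  have := h e he
  have := h' e he
  simp only [mem_symmDiff]
  tauto

variable (ends)

theorem isJoin_empty : IsJoin ends (∅ : Finset V) (∅ : Finset E) := fun v => by
  simp [degIn]

theorem isJoin_singleton (e : E) : IsJoin ends {(ends e).1, (ends e).2} {e} := fun v => by
  by_cases h : v = (ends e).1 ∨ v = (ends e).2 <;> simp [degIn, filter_singleton, eq_comm, h]

theorem exists_isJoin_subset [DecidableEq E] (F : Finset E) (T : Finset V)
    (hT : ∀ S : Finset V, cutEdges ends F S = ∅ → Even #(T ∩ S)) :
    ∃ J ⊆ F, IsJoin ends T J := by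
  induction F using Finset.induction_on generalizing T with
  | empty =>
    have hT : T = ∅ := eq_empty_of_forall_notMem fun t ht => by
      simpa [inter_singleton_of_mem ht] using hT {t} (by simp [cutEdges])
    exact ⟨∅, subset_rfl, hT ▸ isJoin_empty ends⟩
  | @insert e F he ih =>
    by_cases hF : ∀ S, cutEdges ends F S = ∅ → Even #(T ∩ S)
    · obtain ⟨J, hJF, hJ⟩ := ih T hF
      exact ⟨J, hJF.trans (subset_insert e F), hJ⟩
    push Not at hF
    obtain ⟨S₀, hS₀, hodd₀⟩ := hF
    rw [Nat.not_even_iff_odd] at hodd₀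
    set Crosses : Finset V → Prop := fun S => ¬((ends e).1 ∈ S ↔ (ends e).2 ∈ S)
    have hT_of_not_crosses : ∀ S, cutEdges ends F S = ∅ → ¬Crosses S → Even #(T ∩ S) := by
      intro S hS hc
      refine hT S (cutEdges_eq_empty_iff.2 ?_)
      rw [forall_mem_insert]
      exact ⟨not_not.1 hc, cutEdges_eq_empty_iff.1 hS⟩
    have hcross₀ : Crosses S₀ := fun h =>
      Nat.not_even_iff_odd.2 hodd₀ (hT_of_not_crosses S₀ hS₀ (not_not.2 h))
    -- `e` must join the sides of `S₀`. On every `F`-closed `S` the parity of `T` is then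
    -- whether `e` crosses `S`, since `S ∆ S₀` is `F`-closed; so `T ∆ {ends e}` is even on it.
    have hparity : ∀ S, cutEdges ends F S = ∅ → (Odd #(T ∩ S) ↔ Crosses S) := by
      intro S hS
      have := hT_of_not_crosses (S ∆ S₀) (cutEdges_symmDiff_eq_empty hS hS₀)
      rw [← Nat.not_odd_iff_even, inter_symmDiff_distrib_left, odd_card_symmDiff_iff] at this
      simp only [Crosses, mem_symmDiff] at this hcross₀ ⊢
      grind
    have hne : (ends e).1 ≠ (ends e).2 := fun h => hcross₀ (by rw [h])
    obtain ⟨J, hJF, hJ⟩ := ih (T ∆ {(ends e).1, (ends e).2}) fun S hS => by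
      rw [← Nat.not_odd_iff_even, inter_symmDiff_distrib_right, odd_card_symmDiff_iff,
        hparity S hS, odd_card_pair_inter_iff hne]
      tauto
    refine ⟨J ∆ {e}, symmDiff_subset_union.trans ?_, ?_⟩
    · exact union_subset (hJF.trans (subset_insert e F))
        (singleton_subset_iff.2 (mem_insert_self e F))
    · simpa [symmDiff_symmDiff_cancel_right] using hJ.symmDiff (isJoin_singleton ends e)

end Joins

section CycleSpace

variable {V E : Type*} [DecidableEq V] (ends : E → V × V)

open Classical in
noncomputable def cycleSpace (B : Finset E) : Finset (Finset E) :=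
  {Z ∈ B.powerset | IsJoin ends ∅ Z}

variable {ends} {B : Finset E}

theorem mem_cycleSpace {Z : Finset E} :
    Z ∈ cycleSpace ends B ↔ Z ⊆ B ∧ IsJoin ends ∅ Z := by
  simp [cycleSpace]

theorem empty_mem_cycleSpace : ∅ ∈ cycleSpace ends B :=
  mem_cycleSpace.2 ⟨empty_subset B, isJoin_empty ends⟩

theorem symmDiff_mem_cycleSpace [DecidableEq E] {Z Z' : Finset E} (hZ : Z ∈ cycleSpace ends B)
    (hZ' : Z' ∈ cycleSpace ends B) : Z ∆ Z' ∈ cycleSpace ends B := by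
  rw [mem_cycleSpace] at hZ hZ' ⊢
  exact ⟨symmDiff_subset_union.trans (union_subset hZ.1 hZ'.1),
    by simpa using hZ.2.symmDiff hZ'.2⟩

end CycleSpace

section TwoEdgeConnected

variable {V E : Type*} [Fintype V] [DecidableEq V] {ends : E → V × V} {B : Finset E}

theorem eq_empty_or_eq_univ_of_card_cutEdges_lt_two
    (hB : ∀ S : Finset V, S.Nonempty → S ≠ univ → 2 ≤ #(cutEdges ends B S))
    {S : Finset V} (hS : #(cutEdges ends B S) < 2) : S = ∅ ∨ S = univ := by
  by_contra! h
  exact (hB S h.1 h.2).not_gt hS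

theorem exists_mem_cycleSpace_of_mem [DecidableEq E]
    (hB : ∀ S : Finset V, S.Nonempty → S ≠ univ → 2 ≤ #(cutEdges ends B S))
    {e : E} (he : e ∈ B) (hloop : (ends e).1 ≠ (ends e).2) :
    ∃ Z ∈ cycleSpace ends B, e ∈ Z := by
  obtain ⟨J, hJB, hJ⟩ :=
    exists_isJoin_subset ends (B.erase e) {(ends e).1, (ends e).2} fun S hS => by
      have hcut : #(cutEdges ends B S) < 2 := by
        rw [cutEdges, filter_erase, erase_eq_empty_iff] at hS
        rcases hS with hS | hS <;> simp [cutEdges, hS]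
      rcases eq_empty_or_eq_univ_of_card_cutEdges_lt_two hB hcut with rfl | rfl
      · simp
      · simp [card_pair hloop]
  have heJ : e ∉ J := fun h => by simpa using hJB h
  refine ⟨J ∆ {e}, mem_cycleSpace.2 ⟨symmDiff_subset_union.trans ?_, ?_⟩, by
    simp [mem_symmDiff, heJ]⟩
  · exact union_subset (hJB.trans (erase_subset e B)) (singleton_subset_iff.2 he)
  · simpa using hJ.symmDiff (isJoin_singleton ends e)

end TwoEdgeConnected

theorem stmt17_general {V' E' : Type*} [Fintype V'] [DecidableEq V']
    (ends : E' → V' × V') (hloop : ∀ e : E', (ends e).1 ≠ (ends e).2)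
    (W : Finset V') (hW : Even W.card)
    (B : Finset E')
    (hB : ∀ S : Finset V', S.Nonempty → S ≠ Finset.univ →
      2 ≤ (cutEdges ends B S).card) :
    ∃ J : Finset E',
      (∀ v : V', v ∈ W ↔ Odd (degIn ends J v)) ∧ 2 * J.card ≤ B.card := by
  classical
  obtain ⟨J, hJB, hJ⟩ := exists_isJoin_subset ends B W fun S hS => by
    rcases eq_empty_or_eq_univ_of_card_cutEdges_lt_two hB (S := S) (by simp [hS]) with rfl | rfl
    · simp
    · simpa using hW
  obtain ⟨Z, hZ, hJZ⟩ := exists_two_mul_card_symmDiff_le hJB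
    (fun Z hZ => (mem_cycleSpace.1 hZ).1) ⟨∅, empty_mem_cycleSpace⟩
    (fun _ hZ _ hZ' => symmDiff_mem_cycleSpace hZ hZ')
    (fun e he => exists_mem_cycleSpace_of_mem hB he (hloop e))
  refine ⟨J ∆ Z, ?_, hJZ⟩
  simpa [← bot_eq_empty, IsJoin] using hJ.symmDiff (mem_cycleSpace.1 hZ).2

theorem stmt17 {V' E' : Type*} [Fintype V'] [DecidableEq V'] [Fintype E'] [DecidableEq E']
    (ends : E' → V' × V') (hloop : ∀ e : E', (ends e).1 ≠ (ends e).2)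
    (hconn : ∀ S : Finset V', S.Nonempty → S ≠ Finset.univ →
      (cutEdges ends Finset.univ S).Nonempty)
    (W : Finset V') (hW : Even W.card)
    (B : Finset E')
    (hB : ∀ S : Finset V', S.Nonempty → S ≠ Finset.univ →
      2 ≤ (cutEdges ends B S).card) :
    ∃ J : Finset E',
      (∀ v : V', v ∈ W ↔ Odd (degIn ends J v)) ∧ 2 * J.card ≤ B.card :=
  stmt17_general ends hloop W hW B hB
end

section
/- Let G=(V,E) be a connected undirected multigraph without self-loops whose edge set is partitioned into safe edges 𝒮 and unsafe edges 𝒰, and let T be a spanning tree of G that maximizes the number of safe edges |T ∩ 𝒮| among all spanning trees. Then for every safe edge e = uv ∈ 𝒮, the unique u–v path in T consists entirely of safe edges; consequently, the graph obtained from G by contracting all safe edges of T has no safe edges. -/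
/-!
Suppose the endpoints of a safe edge `e = uv` lie in different components of `(V, T ∩ 𝒮)`, and
let `C` be the component of `u`. Along a `T`-walk from `u` to `v`, take the last edge `f = ab`
leaving `C`. It is unsafe (else `b ∈ C`), and the rest of the walk from `b` to `v` stays outside
`C`, so it avoids `f`. Thus `a` and `b` remain connected in `T - f + e` (through `C`, `e` and that
walk), which is therefore a spanning tree with one more safe edge than `T`.
-/

/-- `x` and `y` are joined by some edge of `F` (in either orientation). -/
def Adj {V E : Type*} (ends : E → V × V) (F : Finset E) (x y : V) : Prop :=
  ∃ e ∈ F, ends e = (x, y) ∨ ends e = (y, x)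

/-- `T` is a spanning tree of the multigraph with edge set given by `E`:
it has `|V| - 1` edges and connects every pair of vertices. -/
def IsSpanningTree {V E : Type*} [Fintype V] (ends : E → V × V) (T : Finset E) : Prop :=
  T.card = Fintype.card V - 1 ∧
    ∀ x y : V, Relation.ReflTransGen (Adj ends T) x y

open Relation Finset

theorem Relation.ReflTransGen.exists_last_exit {α : Type*} {r : α → α → Prop} {p : α → Prop}
    {x y : α} (h : ReflTransGen r x y) (hx : p x) (hy : ¬ p y) :
    ∃ a b, p a ∧ ¬ p b ∧ r a b ∧ ReflTransGen (fun z w => r z w ∧ ¬ p z ∧ ¬ p w) b y := by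
  induction h with
  | refl => exact absurd hx hy
  | @tail c y _ hcy ih =>
    by_cases hc : p c
    · exact ⟨c, y, hc, hy, hcy, .refl⟩
    · obtain ⟨a, b, ha, hb, hab, hby⟩ := ih hc
      exact ⟨a, b, ha, hb, hab, hby.tail ⟨hcy, hc, hy⟩⟩

section Multigraph

variable {V E : Type*} {ends : E → V × V}

instance Adj.instSymm (F : Finset E) : Std.Symm (Adj ends F) where
  symm _ _ := fun ⟨e, he, h⟩ => ⟨e, he, h.symm⟩

lemma Adj.mono {F F' : Finset E} (hFF' : F ⊆ F') {x y : V} (h : Adj ends F x y) :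
    Adj ends F' x y :=
  let ⟨e, he, h⟩ := h; ⟨e, hFF' he, h⟩

lemma Adj.erase [DecidableEq E] {F : Finset E} {f : E} {a b x y : V}
    (h : Adj ends F x y) (hf : ends f = (a, b) ∨ ends f = (b, a)) (hx : x ≠ a) (hy : y ≠ a) :
    Adj ends (F.erase f) x y := by
  obtain ⟨g, hg, hxy⟩ := h
  refine ⟨g, mem_erase.mpr ⟨?_, hg⟩, hxy⟩
  rintro rfl
  rcases hf with hf | hf <;> rcases hxy with h | h <;> rw [hf, Prod.mk.injEq] at h <;>
    obtain ⟨rfl, rfl⟩ := h <;> contradiction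

lemma IsSpanningTree.of_card_eq [Fintype V] {T T' : Finset E} (hT : IsSpanningTree ends T)
    (hcard : T'.card = T.card)
    (hconn : ∀ g ∈ T, ReflTransGen (Adj ends T') (ends g).1 (ends g).2) :
    IsSpanningTree ends T' := by
  refine ⟨hcard.trans hT.1, fun x y => ?_⟩
  refine reflTransGen_closed (fun z w ⟨g, hg, hzw⟩ => ?_) _ _ (hT.2 x y)
  rcases hzw with h | h
  · simpa [h] using hconn g hg
  · simpa [h] using symm (hconn g hg)

lemma IsSpanningTree.exchange [Fintype V] [DecidableEq E] {T : Finset E} {e f : E} {a b : V}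
    (hT : IsSpanningTree ends T) (he : e ∉ T) (hf : f ∈ T)
    (hfab : ends f = (a, b) ∨ ends f = (b, a))
    (hab : ReflTransGen (Adj ends (insert e (T.erase f))) a b) :
    IsSpanningTree ends (insert e (T.erase f)) := by
  refine hT.of_card_eq ?_ fun g hg => ?_
  · rw [card_insert_of_notMem (fun h => he (mem_of_mem_erase h)), card_erase_add_one hf]
  · by_cases hgf : g = f
    · subst hgf
      rcases hfab with h | h <;> simp only [h]
      exacts [hab, symm hab]
    · exact .single ⟨g, mem_insert_of_mem (mem_erase.mpr ⟨hgf, hg⟩), .inl rfl⟩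

end Multigraph

theorem stmt18_general {V E : Type*} [Fintype V] [DecidableEq E]
    (ends : E → V × V)
    (safeE : Finset E)
    (T : Finset E) (hT : IsSpanningTree ends T)
    (hmax : ∀ T' : Finset E, IsSpanningTree ends T' →
      (T' ∩ safeE).card ≤ (T ∩ safeE).card) :
    ∀ e ∈ safeE,
      Relation.ReflTransGen (Adj ends (T ∩ safeE)) (ends e).1 (ends e).2 := by
  intro e he
  by_contra h
  set u := (ends e).1
  set v := (ends e).2
  set P : V → Prop := ReflTransGen (Adj ends (T ∩ safeE)) u
  have heT : e ∉ T := fun heT => h (.single ⟨e, mem_inter.mpr ⟨heT, he⟩, .inl rfl⟩)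
  obtain ⟨a, b, ha, hb, ⟨f, hfT, hf⟩, hbv⟩ := (hT.2 u v).exists_last_exit (p := P) .refl h
  have hfS : f ∉ safeE := fun hfS => hb (ha.tail ⟨f, mem_inter.mpr ⟨hfT, hfS⟩, hf⟩)
  set T' := insert e (T.erase f)
  have hsafe : T ∩ safeE ⊆ T' := fun g hg => mem_insert_of_mem <|
    mem_erase.mpr ⟨by rintro rfl; exact hfS (mem_inter.mp hg).2, (mem_inter.mp hg).1⟩
  have hau : ReflTransGen (Adj ends T') a u :=
    ReflTransGen.mono (fun _ _ => Adj.mono hsafe) _ _ (symm ha)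
  have hvb : ReflTransGen (Adj ends T') v b := by
    refine symm (ReflTransGen.mono (fun z w ⟨hzw, hz, hw⟩ => ?_) _ _ hbv)
    exact (hzw.erase hf (by rintro rfl; exact hz ha) (by rintro rfl; exact hw ha)).mono
      (subset_insert _ _)
  have hT' : IsSpanningTree ends T' :=
    hT.exchange heT hfT hf ((hau.tail ⟨e, mem_insert_self e _, .inl rfl⟩).trans hvb)
  have hlt : (T ∩ safeE).card < (T' ∩ safeE).card := by
    refine card_lt_card ⟨subset_inter hsafe inter_subset_right, fun hsub => heT ?_⟩
    exact (mem_inter.mp (hsub (mem_inter.mpr ⟨mem_insert_self e _, he⟩))).1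
  exact (hmax T' hT').not_gt hlt

theorem stmt18 {V E : Type*} [Fintype V] [DecidableEq V] [Fintype E] [DecidableEq E]
    (ends : E → V × V) (hloop : ∀ e : E, (ends e).1 ≠ (ends e).2)
    (safeE : Finset E)
    (hconn : ∀ x y : V, Relation.ReflTransGen (Adj ends Finset.univ) x y)
    (T : Finset E) (hT : IsSpanningTree ends T)
    (hmax : ∀ T' : Finset E, IsSpanningTree ends T' →
      (T' ∩ safeE).card ≤ (T ∩ safeE).card) :
    ∀ e ∈ safeE,
      Relation.ReflTransGen (Adj ends (T ∩ safeE)) (ends e).1 (ends e).2 :=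
  stmt18_general ends safeE T hT hmax
end
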